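/- arXiv:2004.07712 — 2 statements merged into one kernel-verified Lean document; each statement's English description precedes it below -/
import Mathlib

section
/- Let d ≥ 1, let v : 𝕋^d → ℝ^d be a Lipschitz divergence-free vector field whose flow ψ is ergodic with respect to the normalized Lebesgue measure, and let φ : 𝕋^d → ℝ be a nonnegative integrable function with strictly positive average ⟨φ⟩ > 0. Let p ∈ [1,∞) and θ_0 ∈ L^p(𝕋^d), and let θ be the solution of the damped transport equation ∂_t θ + v·∇θ = −φ θ with θ(0,·) = θ_0, i.e. θ(t,ψ(t,x)) = θ_0(x) exp(−∫_0^t φ(ψ(τ,x)) dτ). Then ‖θ(t)‖_{L^p} → 0 as t → +∞. -/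
/-!
Along almost every orbit the damping accumulates without bound. The set of points whose orbit
tail `∫_s^∞ φ(ψ τ x) dτ` is finite for some `s` is invariant under the flow, and the tails are
sub-invariant, hence almost everywhere invariant, under the measure-preserving maps `ψ s`. On that
set this forces `∫_0^1 φ(ψ τ x) dτ = 0`, which `⟨φ⟩ > 0` rules out on a set of full measure, so by
ergodicity the set is null. Since `ψ t` preserves measure, `‖θ(t)‖_p` is the `L^p` norm of
`θ₀ exp(-∫_0^t φ ∘ ψ)`, which tends to `0` by dominated convergence.
-/

open MeasureTheory Filter Topology

noncomputable section

/-- The `d`-dimensional torus `ℝ^d/ℤ^d`, equipped with the normalized Lebesgue (Haar)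
measure `volume`. -/
abbrev Torus (d : ℕ) := Fin d → AddCircle (1 : ℝ)

/-- The canonical projection `ℝ^d → 𝕋^d`. -/
def Torus.proj (d : ℕ) (y : Fin d → ℝ) : Torus d := fun i => (y i : AddCircle (1 : ℝ))

/-- `ψ : ℝ × 𝕋^d → 𝕋^d` is the flow of the (autonomous) vector field `v : 𝕋^d → ℝ^d`:
it is a one-parameter group of transformations, `ψ(0,x) = x`, and for every `x` the orbit
`t ↦ ψ(t,x)` lifts to a curve `X : ℝ → ℝ^d` solving the ODE `Ẋ(t) = v(ψ(t,x))`,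
i.e. `∂_t ψ(t,x) = v(ψ(t,x))`. -/
def IsFlowOf (d : ℕ) (v : Torus d → Fin d → ℝ) (ψ : ℝ → Torus d → Torus d) : Prop :=
  (∀ x, ψ 0 x = x) ∧ (∀ s t : ℝ, ψ t ∘ ψ s = ψ (t + s)) ∧
    ∀ x : Torus d, ∃ X : ℝ → Fin d → ℝ,
      (∀ t : ℝ, Torus.proj d (X t) = ψ t x) ∧ ∀ t : ℝ, HasDerivAt X (v (ψ t x)) t

open Set Function
open scoped ENNReal

theorem setLIntegral_Ioi_comp_add_right (g : ℝ → ℝ≥0∞) (s u : ℝ) :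
    ∫⁻ τ in Ioi s, g (τ + u) = ∫⁻ τ in Ioi (s + u), g τ := by
  have := (measurePreserving_add_right volume u).setLIntegral_comp_preimage_emb
    (measurableEmbedding_addRight u) g (Ioi (s + u))
  rwa [preimage_add_const_Ioi, add_sub_cancel_right] at this

theorem tendsto_intervalIntegral_atTop_of_lintegral_Ioi_eq_top {g : ℝ → ℝ} {a : ℝ}
    (hg : AEMeasurable g) (hg0 : ∀ τ, 0 ≤ g τ)
    (hfin : ∀ t, ∫⁻ τ in Ioc a t, ENNReal.ofReal (g τ) ≠ ∞)
    (htop : ∫⁻ τ in Ioi a, ENNReal.ofReal (g τ) = ∞) :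
    Tendsto (fun t => ∫ τ in a..t, g τ) atTop atTop := by
  set ν := (volume.restrict (Ioi a)).withDensity fun τ => ENNReal.ofReal (g τ)
  have hν : Tendsto (fun t => ∫⁻ τ in Ioc a t, ENNReal.ofReal (g τ)) atTop (𝓝 ∞) := by
    convert tendsto_measure_Iic_atTop ν using 2 with t
    · rw [withDensity_apply _ measurableSet_Iic, Measure.restrict_restrict measurableSet_Iic,
        Iic_inter_Ioi]
    · rw [withDensity_apply _ MeasurableSet.univ, Measure.restrict_univ, htop]
  rw [← ENNReal.tendsto_ofReal_nhds_top]
  refine hν.congr' ?_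
  filter_upwards [eventually_ge_atTop a] with t ht
  have hint : IntegrableOn g (Ioc a t) :=
    ⟨hg.aestronglyMeasurable.restrict, (hasFiniteIntegral_iff_ofReal
      (Eventually.of_forall fun τ => hg0 τ)).2 (hfin t).lt_top⟩
  rw [intervalIntegral.integral_of_le ht,
    ofReal_integral_eq_lintegral_ofReal hint (Eventually.of_forall fun τ => hg0 τ)]

section General

variable {α : Type*} [MeasurableSpace α] {μ : Measure α}

theorem tendsto_eLpNorm_of_dominated {ι E F : Type*} [NormedAddCommGroup E]
    [NormedAddCommGroup F] {l : Filter ι} [l.IsCountablyGenerated] {p : ℝ≥0∞} (hp : p ≠ ∞)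
    {f : ι → α → E} {g : α → F} (hg : MemLp g p μ)
    (hf : ∀ᶠ i in l, AEStronglyMeasurable (f i) μ) (hfg : ∀ᶠ i in l, ∀ᵐ x ∂μ, ‖f i x‖ ≤ ‖g x‖)
    (hlim : ∀ᵐ x ∂μ, Tendsto (fun i => f i x) l (𝓝 0)) :
    Tendsto (fun i => eLpNorm (f i) p μ) l (𝓝 0) := by
  rcases eq_or_ne p 0 with rfl | hp0
  · simpa using tendsto_const_nhds
  have hp_pos : 0 < p.toReal := ENNReal.toReal_pos hp0 hp
  simp_rw [eLpNorm_eq_lintegral_rpow_enorm_toReal hp0 hp]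
  have hlint : Tendsto (fun i => ∫⁻ x, ‖f i x‖ₑ ^ p.toReal ∂μ) l (𝓝 0) := by
    have := tendsto_lintegral_filter_of_dominated_convergence' (f := 0)
      (fun x => ‖g x‖ₑ ^ p.toReal) (hf.mono fun i hi => hi.enorm.pow_const _)
      (hfg.mono fun i hi => hi.mono fun x hx =>
        ENNReal.rpow_le_rpow (enorm_le_iff_norm_le.2 hx) hp_pos.le)
      (lintegral_rpow_enorm_lt_top_of_eLpNorm_lt_top hp0 hp hg.eLpNorm_lt_top).ne
      (hlim.mono fun x hx => ?_)
    · simpa using this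
    · have h0 : Tendsto (fun i => ‖f i x‖ₑ) l (𝓝 0) := by simpa using hx.enorm
      have := (ENNReal.continuous_rpow_const (y := p.toReal)).tendsto 0 |>.comp h0
      simpa [Function.comp_def, ENNReal.zero_rpow_of_pos hp_pos] using this
  have := (ENNReal.continuous_rpow_const (y := 1 / p.toReal)).tendsto 0 |>.comp hlint
  rwa [ENNReal.zero_rpow_of_pos (one_div_pos.2 hp_pos)] at this

theorem MeasureTheory.MeasurePreserving.ae_comp_eq_of_comp_le [IsFiniteMeasure μ] {S : α → α}
    (hS : MeasurePreserving S μ μ) {F : α → ℝ≥0∞} (hF : Measurable F)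
    (hle : ∀ x, F (S x) ≤ F x) : F ∘ S =ᵐ[μ] F := by
  -- `h ∘ F ≤ h ∘ F ∘ S` are bounded with equal integrals, and `h` is injective.
  set h : ℝ≥0∞ → ℝ≥0∞ := fun a => (1 + a)⁻¹
  have hh : Measurable h := (measurable_const_add 1).inv
  have hh_le : ∀ a, h a ≤ 1 := fun a => ENNReal.inv_le_one.2 le_self_add
  have hh_inj : Injective h := fun a b hab =>
    (ENNReal.add_right_inj ENNReal.one_ne_top).1 (inv_injective hab)
  have key : h ∘ F =ᵐ[μ] h ∘ F ∘ S := by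
    refine ae_eq_of_ae_le_of_lintegral_le (Eventually.of_forall fun x => ?_) ?_
      (hh.comp (hF.comp hS.measurable)).aemeasurable (hS.lintegral_comp (hh.comp hF)).le
    · exact ENNReal.inv_le_inv.2 (add_le_add_right (hle x) 1)
    · refine ne_top_of_le_ne_top (measure_ne_top μ univ) ?_
      simpa using lintegral_mono fun x => hh_le (F x)
  filter_upwards [key] with x hx
  exact (hh_inj hx).symm

theorem lintegral_setLIntegral_comp_of_measurePreserving {β : Type*} [MeasurableSpace β]
    {ν : Measure β} [SFinite μ] [SFinite ν] {ψ : β → α → α} (hψ : Measurable (uncurry ψ))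
    (hmp : ∀ τ, MeasurePreserving (ψ τ) μ μ) {f : α → ℝ≥0∞} (hf : Measurable f) (s : Set β) :
    ∫⁻ x, ∫⁻ τ in s, f (ψ τ x) ∂ν ∂μ = ν s * ∫⁻ x, f x ∂μ := by
  rw [lintegral_lintegral_swap (f := fun x τ => f (ψ τ x))
    (hf.comp (hψ.comp measurable_swap)).aemeasurable]
  simp_rw [(hmp _).lintegral_comp hf]
  rw [setLIntegral_const, mul_comm]

theorem ae_ae_comp_eq_of_quasiMeasurePreserving {β γ : Type*} [MeasurableSpace β]
    {ν : Measure β} [SFinite μ] [SFinite ν] {ψ : β → α → α} (hψ : Measurable (uncurry ψ))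
    (hqmp : ∀ τ, Measure.QuasiMeasurePreserving (ψ τ) μ μ) {f g : α → γ} (hfg : f =ᵐ[μ] g) :
    ∀ᵐ x ∂μ, ∀ᵐ τ ∂ν, f (ψ τ x) = g (ψ τ x) := by
  obtain ⟨N, hN_sub, hN_meas, hN_null⟩ := exists_measurable_superset_of_null hfg
  have hN_orbit : ∀ᵐ x ∂μ, ∀ᵐ τ ∂ν, ψ τ x ∉ N := by
    refine (Measure.ae_ae_comm (p := fun x τ => ψ τ x ∉ N)
      (hψ.comp measurable_swap hN_meas).compl).2 (Eventually.of_forall fun τ => ?_)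
    exact measure_eq_zero_iff_ae_notMem.1 ((hqmp τ).preimage_null hN_null)
  filter_upwards [hN_orbit] with x hx
  filter_upwards [hx] with τ hτ
  exact not_not.1 fun h => hτ (hN_sub h)

theorem measurableSet_setOf_exists_setLIntegral_Ioi_comp_lt_top {ψ : ℝ → α → α}
    (hψ : Measurable (uncurry ψ)) {f : α → ℝ≥0∞} (hf : Measurable f) :
    MeasurableSet {x | ∃ s : ℝ, ∫⁻ τ in Ioi s, f (ψ τ x) < ∞} := by
  have hT : ∀ s : ℝ, Measurable fun x => ∫⁻ τ in Ioi s, f (ψ τ x) := fun s =>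
    (hf.comp (hψ.comp measurable_swap)).lintegral_prod_right'
  have hA : {x | ∃ s : ℝ, ∫⁻ τ in Ioi s, f (ψ τ x) < ∞} =
      ⋃ n : ℕ, {x | ∫⁻ τ in Ioi (n : ℝ), f (ψ τ x) < ∞} := by
    ext x
    refine ⟨fun ⟨s, hs⟩ => ?_, fun hx => ?_⟩
    · obtain ⟨n, hn⟩ := exists_nat_ge s
      exact mem_iUnion.2 ⟨n, (lintegral_mono_set (Ioi_subset_Ioi hn)).trans_lt hs⟩
    · obtain ⟨n, hn⟩ := mem_iUnion.1 hx
      exact ⟨n, hn⟩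
  rw [hA]
  exact .iUnion fun n => measurableSet_lt (hT n) measurable_const

end General

structure IsMeasurePreservingFlow {α : Type*} [MeasurableSpace α] (μ : Measure α)
    (ψ : ℝ → α → α) : Prop where
  map_zero : ∀ x, ψ 0 x = x
  map_add : ∀ s t x, ψ t (ψ s x) = ψ (t + s) x
  measurable_uncurry : Measurable (uncurry ψ)
  measurePreserving : ∀ t, MeasurePreserving (ψ t) μ μ

namespace IsMeasurePreservingFlow

variable {α : Type*} [MeasurableSpace α] {μ : Measure α} {ψ : ℝ → α → α}

theorem leftInverse_neg (hψ : IsMeasurePreservingFlow μ ψ) (t : ℝ) :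
    LeftInverse (ψ (-t)) (ψ t) := fun x => by
  rw [hψ.map_add, neg_add_cancel, hψ.map_zero]

theorem rightInverse_neg (hψ : IsMeasurePreservingFlow μ ψ) (t : ℝ) :
    RightInverse (ψ (-t)) (ψ t) := fun x => by
  simpa using hψ.leftInverse_neg (-t) x

theorem measurableEmbedding (hψ : IsMeasurePreservingFlow μ ψ) (t : ℝ) :
    MeasurableEmbedding (ψ t) :=
  (MeasurableEquiv.mk ⟨ψ t, ψ (-t), hψ.leftInverse_neg t, hψ.rightInverse_neg t⟩
    (hψ.measurePreserving t).measurable (hψ.measurePreserving (-t)).measurable).measurableEmbedding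

theorem ae_ae_comp_eq [SFinite μ] (hψ : IsMeasurePreservingFlow μ ψ) {γ : Type*}
    {f g : α → γ} (hfg : f =ᵐ[μ] g) : ∀ᵐ x ∂μ, ∀ᵐ τ, f (ψ τ x) = g (ψ τ x) :=
  ae_ae_comp_eq_of_quasiMeasurePreserving hψ.measurable_uncurry
    (fun τ => (hψ.measurePreserving τ).quasiMeasurePreserving) hfg

theorem setLIntegral_Ioi_comp_map (hψ : IsMeasurePreservingFlow μ ψ) (f : α → ℝ≥0∞)
    (s u : ℝ) (x : α) :
    ∫⁻ τ in Ioi s, f (ψ τ (ψ u x)) = ∫⁻ τ in Ioi (s + u), f (ψ τ x) := by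
  simp_rw [hψ.map_add]
  exact setLIntegral_Ioi_comp_add_right (fun τ => f (ψ τ x)) s u

theorem ae_forall_setLIntegral_Ioc_comp_lt_top [SFinite μ] (hψ : IsMeasurePreservingFlow μ ψ)
    {f : α → ℝ≥0∞} (hf : Measurable f) (hfin : ∫⁻ x, f x ∂μ ≠ ∞) (a : ℝ) :
    ∀ᵐ x ∂μ, ∀ t, ∫⁻ τ in Ioc a t, f (ψ τ x) < ∞ := by
  have hmeas : ∀ t, Measurable fun x => ∫⁻ τ in Ioc a t, f (ψ τ x) := fun t =>
    (hf.comp (hψ.measurable_uncurry.comp measurable_swap)).lintegral_prod_right'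
  have hnat : ∀ n : ℕ, ∀ᵐ x ∂μ, ∫⁻ τ in Ioc a (a + n), f (ψ τ x) < ∞ := fun n =>
    ae_lt_top (hmeas _) <| by
      rw [lintegral_setLIntegral_comp_of_measurePreserving hψ.measurable_uncurry
        hψ.measurePreserving hf]
      exact ENNReal.mul_ne_top (by simp) hfin
  filter_upwards [ae_all_iff.2 hnat] with x hx t
  obtain ⟨n, hn⟩ := exists_nat_ge (t - a)
  exact (lintegral_mono_set (Ioc_subset_Ioc_right (by linarith))).trans_lt (hx n)

theorem ae_setLIntegral_Ioi_comp_eq [IsFiniteMeasure μ] (hψ : IsMeasurePreservingFlow μ ψ)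
    {f : α → ℝ≥0∞} (hf : Measurable f) {s : ℝ} (hs : 0 ≤ s) :
    ∀ᵐ x ∂μ, ∫⁻ τ in Ioi s, f (ψ τ x) = ∫⁻ τ in Ioi 0, f (ψ τ x) := by
  have hT : Measurable fun x => ∫⁻ τ in Ioi 0, f (ψ τ x) :=
    (hf.comp (hψ.measurable_uncurry.comp measurable_swap)).lintegral_prod_right'
  have hT_map : ∀ x, ∫⁻ τ in Ioi 0, f (ψ τ (ψ s x)) = ∫⁻ τ in Ioi s, f (ψ τ x) := fun x => by
    simpa using hψ.setLIntegral_Ioi_comp_map f 0 s x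
  filter_upwards [(hψ.measurePreserving s).ae_comp_eq_of_comp_le hT fun x => by
    rw [hT_map]; exact lintegral_mono_set (Ioi_subset_Ioi hs)] with x hx
  rwa [comp_apply, hT_map] at hx

theorem image_setOf_exists_setLIntegral_Ioi_comp_lt_top (hψ : IsMeasurePreservingFlow μ ψ)
    (f : α → ℝ≥0∞) (t : ℝ) :
    ψ t '' {x | ∃ s : ℝ, ∫⁻ τ in Ioi s, f (ψ τ x) < ∞} =
      {x | ∃ s : ℝ, ∫⁻ τ in Ioi s, f (ψ τ x) < ∞} := by
  rw [image_eq_preimage_of_inverse (hψ.leftInverse_neg t) (hψ.rightInverse_neg t)]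
  ext x
  simp only [mem_preimage, mem_ofPred_eq, hψ.setLIntegral_Ioi_comp_map]
  exact ⟨fun ⟨s, hs⟩ => ⟨_, hs⟩, fun ⟨s, hs⟩ => ⟨s + t, by simpa using hs⟩⟩

theorem ae_setLIntegral_Ioi_comp_eq_top [IsProbabilityMeasure μ]
    (hψ : IsMeasurePreservingFlow μ ψ)
    (herg : ∀ A, MeasurableSet A → (∀ t, ψ t '' A = A) → μ A = 0 ∨ μ A = 1)
    {f : α → ℝ≥0∞} (hf : Measurable f) (hf0 : ∫⁻ x, f x ∂μ ≠ 0) :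
    ∀ᵐ x ∂μ, ∫⁻ τ in Ioi 0, f (ψ τ x) = ∞ := by
  set T : ℝ → α → ℝ≥0∞ := fun s x => ∫⁻ τ in Ioi s, f (ψ τ x)
  set A := {x | ∃ s : ℝ, T s x < ∞}
  have hA_meas : MeasurableSet A :=
    measurableSet_setOf_exists_setLIntegral_Ioi_comp_lt_top hψ.measurable_uncurry hf
  have hA_ne_one : μ A ≠ 1 := fun hA => by
    have hP : ∀ᵐ x ∂μ, ∫⁻ τ in Ioc 0 1, f (ψ τ x) = 0 := by
      have hA_ae : ∀ᵐ x ∂μ, x ∈ A := by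
        rwa [ae_iff, ← compl_def, prob_compl_eq_zero_iff hA_meas]
      have hT_inv : ∀ᵐ x ∂μ, ∀ n : ℕ, T n x = T 0 x :=
        ae_all_iff.2 fun n => hψ.ae_setLIntegral_Ioi_comp_eq hf n.cast_nonneg
      filter_upwards [hA_ae, hT_inv] with x ⟨s, hs⟩ hx
      obtain ⟨n, hn⟩ := exists_nat_ge s
      have hfin : T 0 x ≠ ∞ := hx n ▸ ((lintegral_mono_set (Ioi_subset_Ioi hn)).trans_lt hs).ne
      have hsplit : T 0 x = (∫⁻ τ in Ioc 0 1, f (ψ τ x)) + T 1 x := by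
        simp only [T]
        rw [← lintegral_union measurableSet_Ioi (Ioc_disjoint_Ioi le_rfl),
          Ioc_union_Ioi_eq_Ioi zero_le_one]
      rw [show T 1 x = T 0 x by exact_mod_cast hx 1] at hsplit
      exact (ENNReal.add_left_inj hfin).1 (by rw [zero_add]; exact hsplit.symm)
    apply hf0
    have := lintegral_setLIntegral_comp_of_measurePreserving (ν := volume) hψ.measurable_uncurry
      hψ.measurePreserving hf (Ioc 0 1)
    rwa [lintegral_congr_ae hP, lintegral_zero, Real.volume_Ioc, sub_zero, ENNReal.ofReal_one,
      one_mul, eq_comm] at this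
  have hA_null : μ A = 0 :=
    (herg A hA_meas (hψ.image_setOf_exists_setLIntegral_Ioi_comp_lt_top f)).resolve_right
      hA_ne_one
  filter_upwards [measure_eq_zero_iff_ae_notMem.1 hA_null] with x hx
  by_contra h
  exact hx ⟨0, lt_top_iff_ne_top.2 h⟩

theorem aestronglyMeasurable_intervalIntegral_comp [SFinite μ]
    (hψ : IsMeasurePreservingFlow μ ψ) {φ : α → ℝ} (hφ : AEStronglyMeasurable φ μ) (a b : ℝ) :
    AEStronglyMeasurable (fun x => ∫ τ in a..b, φ (ψ τ x)) μ := by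
  have hφ' := hφ.stronglyMeasurable_mk.comp_measurable
    (hψ.measurable_uncurry.comp measurable_swap)
  refine ⟨fun x => ∫ τ in a..b, hφ.mk φ (ψ τ x),
    hφ'.integral_prod_right'.sub hφ'.integral_prod_right', ?_⟩
  filter_upwards [hψ.ae_ae_comp_eq hφ.ae_eq_mk] with x hx
  exact intervalIntegral.integral_congr_ae (hx.mono fun τ hτ _ => hτ)

theorem ae_tendsto_intervalIntegral_comp_atTop [IsProbabilityMeasure μ]
    (hψ : IsMeasurePreservingFlow μ ψ)
    (herg : ∀ A, MeasurableSet A → (∀ t, ψ t '' A = A) → μ A = 0 ∨ μ A = 1)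
    {φ : α → ℝ} (hφ0 : ∀ x, 0 ≤ φ x) (hφint : Integrable φ μ) (hφavg : 0 < ∫ x, φ x ∂μ) :
    ∀ᵐ x ∂μ, Tendsto (fun t => ∫ τ in (0 : ℝ)..t, φ (ψ τ x)) atTop atTop := by
  obtain ⟨φ', hφ', hφφ'⟩ := hφint.aemeasurable
  set f : α → ℝ≥0∞ := fun x => ENNReal.ofReal (φ' x)
  have hf : Measurable f := ENNReal.measurable_ofReal.comp hφ'
  have hf_lint : ∫⁻ x, f x ∂μ = ENNReal.ofReal (∫ x, φ x ∂μ) := by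
    rw [ofReal_integral_eq_lintegral_ofReal hφint (Eventually.of_forall hφ0)]
    exact lintegral_congr_ae (hφφ'.mono fun x hx => by simp [f, hx])
  filter_upwards [hψ.ae_ae_comp_eq hφφ',
    hψ.ae_setLIntegral_Ioi_comp_eq_top herg hf (by simpa [hf_lint] using hφavg),
    hψ.ae_forall_setLIntegral_Ioc_comp_lt_top hf (by simp [hf_lint]) 0] with x hx htop hfin
  have hg : (fun τ => ENNReal.ofReal (φ (ψ τ x))) =ᵐ[volume] fun τ => f (ψ τ x) :=
    hx.mono fun τ hτ => by simp [f, hτ]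
  refine tendsto_intervalIntegral_atTop_of_lintegral_Ioi_eq_top ?_ (fun τ => hφ0 _)
    (fun t => ?_) ?_
  · exact (hφ'.comp (hψ.measurable_uncurry.comp measurable_prodMk_right)).aemeasurable.congr
      (hx.mono fun τ hτ => hτ.symm)
  · rw [lintegral_congr_ae (ae_restrict_of_ae hg)]
    exact (hfin t).ne
  · rwa [lintegral_congr_ae (ae_restrict_of_ae hg)]

theorem tendsto_eLpNorm_mul_exp_neg_intervalIntegral_comp [IsProbabilityMeasure μ]
    (hψ : IsMeasurePreservingFlow μ ψ)
    (herg : ∀ A, MeasurableSet A → (∀ t, ψ t '' A = A) → μ A = 0 ∨ μ A = 1)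
    {φ : α → ℝ} (hφ0 : ∀ x, 0 ≤ φ x) (hφint : Integrable φ μ) (hφavg : 0 < ∫ x, φ x ∂μ)
    {p : ℝ≥0∞} (hp : p ≠ ∞) {θ₀ : α → ℝ} (hθ₀ : MemLp θ₀ p μ) :
    Tendsto (fun t => eLpNorm (fun x => θ₀ x * Real.exp (-∫ τ in (0 : ℝ)..t, φ (ψ τ x))) p μ)
      atTop (𝓝 0) := by
  refine tendsto_eLpNorm_of_dominated hp hθ₀ (Eventually.of_forall fun t => hθ₀.1.mul
    (Real.continuous_exp.comp_aestronglyMeasurable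
      (hψ.aestronglyMeasurable_intervalIntegral_comp hφint.1 0 t).neg)) ?_ ?_
  · filter_upwards [eventually_ge_atTop 0] with t ht
    refine Eventually.of_forall fun x => ?_
    have hI : 0 ≤ ∫ τ in (0 : ℝ)..t, φ (ψ τ x) :=
      intervalIntegral.integral_nonneg ht fun τ _ => hφ0 _
    rw [norm_mul, Real.norm_of_nonneg (Real.exp_nonneg _)]
    exact mul_le_of_le_one_right (norm_nonneg _) (Real.exp_le_one_iff.2 (neg_nonpos.2 hI))
  · filter_upwards [hψ.ae_tendsto_intervalIntegral_comp_atTop herg hφ0 hφint hφavg] with x hx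
    simpa using (Real.tendsto_exp_atBot.comp (tendsto_neg_atTop_atBot.comp hx)).const_mul (θ₀ x)

end IsMeasurePreservingFlow

instance : IsProbabilityMeasure (volume : Measure (AddCircle (1 : ℝ))) :=
  ⟨UnitAddCircle.measure_univ⟩

theorem IsFlowOf.continuous_orbit {d : ℕ} {v : Torus d → Fin d → ℝ}
    {ψ : ℝ → Torus d → Torus d} (hflow : IsFlowOf d v ψ) (x : Torus d) :
    Continuous fun t => ψ t x := by
  obtain ⟨X, hXψ, hX⟩ := hflow.2.2 x
  have hproj : Continuous (Torus.proj d) :=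
    continuous_pi fun i => continuous_quotient_mk'.comp (continuous_apply i)
  simp_rw [← hXψ]
  exact hproj.comp (continuous_iff_continuousAt.2 fun t => (hX t).continuousAt)

theorem IsFlowOf.isMeasurePreservingFlow {d : ℕ} {v : Torus d → Fin d → ℝ}
    {ψ : ℝ → Torus d → Torus d} (hflow : IsFlowOf d v ψ)
    (hψmp : ∀ t, MeasurePreserving (ψ t) volume volume) : IsMeasurePreservingFlow volume ψ where
  map_zero := hflow.1
  map_add s t x := congrFun (hflow.2.1 s t) x
  measurable_uncurry := measurable_uncurry_of_continuous_of_measurable hflow.continuous_orbit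
    fun t => (hψmp t).measurable
  measurePreserving := hψmp

theorem transport_damped_ergodic_decay_general
    (d : ℕ)
    (v : Torus d → Fin d → ℝ)
    (ψ : ℝ → Torus d → Torus d) (hflow : IsFlowOf d v ψ)
    -- `v` is divergence free: the flow preserves the normalized Lebesgue measure
    (hψmp : ∀ t : ℝ, MeasurePreserving (ψ t) volume volume)
    -- the flow is ergodic
    (hψerg : ∀ A : Set (Torus d), MeasurableSet A → (∀ t : ℝ, ψ t '' A = A) →
      volume A = 0 ∨ volume A = 1)
    (φ : Torus d → ℝ) (hφ0 : ∀ x, 0 ≤ φ x)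
    (hφint : Integrable φ (volume : Measure (Torus d)))
    (hφavg : 0 < ∫ x, φ x ∂(volume : Measure (Torus d)))
    (p : ℝ)
    (θ₀ : Torus d → ℝ) (hθ₀ : MemLp θ₀ (ENNReal.ofReal p) (volume : Measure (Torus d)))
    (θ : ℝ → Torus d → ℝ)
    (hθ : ∀ t : ℝ, ∀ x : Torus d,
      θ t (ψ t x) = θ₀ x * Real.exp (-∫ τ in (0:ℝ)..t, φ (ψ τ x))) :
    Tendsto (fun t : ℝ => eLpNorm (θ t) (ENNReal.ofReal p) (volume : Measure (Torus d)))
      atTop (𝓝 0) := by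
  have hψ := hflow.isMeasurePreservingFlow hψmp
  have hθ_eq : ∀ t, eLpNorm (θ t) (ENNReal.ofReal p) volume =
      eLpNorm (fun x => θ₀ x * Real.exp (-∫ τ in (0:ℝ)..t, φ (ψ τ x))) (ENNReal.ofReal p) volume :=
    fun t => calc
      _ = eLpNorm (θ t) (ENNReal.ofReal p) (volume.map (ψ t)) := by rw [(hψmp t).map_eq]
      _ = eLpNorm (θ t ∘ ψ t) (ENNReal.ofReal p) volume :=
        (hψ.measurableEmbedding t).eLpNorm_map_measure
      _ = _ := congrArg (eLpNorm · _ _) (funext (hθ t))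
  simpa only [hθ_eq] using hψ.tendsto_eLpNorm_mul_exp_neg_intervalIntegral_comp hψerg hφ0 hφint
    hφavg ENNReal.ofReal_ne_top hθ₀

/-- **Theorem 2.2 (i): decay of the energy for ergodic flows.**
Let `d ≥ 1`, let `v : 𝕋^d → ℝ^d` be a Lipschitz divergence-free vector field (so its flow `ψ`
preserves the Lebesgue measure) whose flow is ergodic, and let `φ ≥ 0` be integrable with
`⟨φ⟩ > 0`.  Let `p ∈ [1,∞)`, `θ₀ ∈ L^p(𝕋^d)`, and let `θ` be the solution of
`∂_t θ + v·∇θ = -φ θ`, `θ(0,·) = θ₀`, given along characteristics by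
`θ(t,ψ(t,x)) = θ₀(x) exp(-∫_0^t φ(ψ(τ,x)) dτ)`.  Then `‖θ(t)‖_{L^p} → 0` as `t → +∞`. -/
theorem transport_damped_ergodic_decay
    (d : ℕ) (hd : 1 ≤ d)
    (v : Torus d → Fin d → ℝ) (K : NNReal) (hv : LipschitzWith K v)
    (ψ : ℝ → Torus d → Torus d) (hflow : IsFlowOf d v ψ)
    -- `v` is divergence free: the flow preserves the normalized Lebesgue measure
    (hψmp : ∀ t : ℝ, MeasurePreserving (ψ t) volume volume)
    -- the flow is ergodic
    (hψerg : ∀ A : Set (Torus d), MeasurableSet A → (∀ t : ℝ, ψ t '' A = A) →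
      volume A = 0 ∨ volume A = 1)
    (φ : Torus d → ℝ) (hφ0 : ∀ x, 0 ≤ φ x)
    (hφint : Integrable φ (volume : Measure (Torus d)))
    (hφavg : 0 < ∫ x, φ x ∂(volume : Measure (Torus d)))
    (p : ℝ) (hp : 1 ≤ p)
    (θ₀ : Torus d → ℝ) (hθ₀ : MemLp θ₀ (ENNReal.ofReal p) (volume : Measure (Torus d)))
    (θ : ℝ → Torus d → ℝ)
    (hθ : ∀ t : ℝ, ∀ x : Torus d,
      θ t (ψ t x) = θ₀ x * Real.exp (-∫ τ in (0:ℝ)..t, φ (ψ τ x))) :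
    Tendsto (fun t : ℝ => eLpNorm (θ t) (ENNReal.ofReal p) (volume : Measure (Torus d)))
      atTop (𝓝 0) :=
  transport_damped_ergodic_decay_general d v ψ hflow hψmp hψerg φ hφ0 hφint hφavg p θ₀ hθ₀ θ hθ

end
end

section
/- Let d ≥ 1, let v : 𝕋^d → ℝ^d be a Lipschitz divergence-free vector field whose flow ψ is uniquely ergodic, and let φ : 𝕋^d → ℝ be a nonnegative continuous function with ⟨φ⟩ > 0. Let p ∈ [1,∞], θ_0 ∈ L^p(𝕋^d), and let θ be the solution of ∂_t θ + v·∇θ = −φ θ with θ(0,·) = θ_0, i.e. θ(t,ψ(t,x)) = θ_0(x) exp(−∫_0^t φ(ψ(τ,x)) dτ). Then for every μ ∈ [0, ⟨φ⟩) there exists T_0 > 0 such that for all t ≥ T_0, ‖θ(t)‖_{L^p} ≤ ‖θ_0‖_{L^p} e^{−μ t}. -/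
/-!
If the orbit averages `t⁻¹ ∫₀ᵗ φ(ψ τ x) dτ` did not eventually exceed `μ` uniformly in `x`,
the normalized occupation measures of bad orbit segments, of lengths `Tₙ → ∞`, would have a
weak limit on the compact space `𝕋^d` (Prokhorov). Moving the time window by `s` changes an
average by `O(s / Tₙ)`, so the limit is a flow-invariant probability measure with `∫ φ ≤ μ`;
by unique ergodicity it is Lebesgue measure, contradicting `μ < ⟨φ⟩`. Hence, for `t` large,
`|θ(t)| ≤ e^{-μt} |θ₀ ∘ ψ(-t)|` pointwise, and `ψ(-t)` preserves every `L^p` norm.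
-/

open MeasureTheory Filter Topology

noncomputable section

theorem norm_intervalIntegral_comp_add_right_sub_le {E : Type*} [NormedAddCommGroup E]
    [NormedSpace ℝ E] {F : ℝ → E} (hF : Continuous F) {C : ℝ} (hC : ∀ τ, ‖F τ‖ ≤ C)
    (T s : ℝ) : ‖(∫ τ in (0 : ℝ)..T, F (τ + s)) - ∫ τ in (0 : ℝ)..T, F τ‖ ≤ 2 * C * |s| := by
  have hint : ∀ a b : ℝ, IntervalIntegrable F volume a b := hF.intervalIntegrable
  have hbound : ∀ a b : ℝ, ‖∫ τ in a..b, F τ‖ ≤ C * |b - a| := fun a b =>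
    intervalIntegral.norm_integral_le_of_norm_le_const fun τ _ => hC τ
  rw [intervalIntegral.integral_comp_add_right, zero_add,
    intervalIntegral.integral_interval_sub_interval_comm (hint _ _) (hint _ _) (hint _ _)]
  calc _ ≤ ‖∫ τ in s..0, F τ‖ + ‖∫ τ in (T + s)..T, F τ‖ := norm_sub_le _ _
    _ ≤ C * |0 - s| + C * |T - (T + s)| := add_le_add (hbound _ _) (hbound _ _)
    _ = 2 * C * |s| := by rw [zero_sub, sub_add_cancel_left, abs_neg]; ring

open scoped BoundedContinuousFunction

namespace Flow

section

variable {X : Type*} [MeasurableSpace X]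

def orbitMeasure (Φ : ℝ → X → X) (x : X) (T : ℝ) : Measure X :=
  (ENNReal.ofReal T)⁻¹ • (volume.restrict (Set.Ioc 0 T)).map fun τ => Φ τ x

variable {Φ : ℝ → X → X} {x : X} {T : ℝ}

theorem isProbabilityMeasure_orbitMeasure (hΦ : Measurable fun τ => Φ τ x) (hT : 0 < T) :
    IsProbabilityMeasure (orbitMeasure Φ x T) := by
  constructor
  rw [orbitMeasure, Measure.smul_apply, Measure.map_apply hΦ MeasurableSet.univ,
    Set.preimage_univ, Measure.restrict_apply_univ, Real.volume_Ioc, sub_zero, smul_eq_mul,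
    ENNReal.inv_mul_cancel (by simpa using hT) ENNReal.ofReal_ne_top]

theorem integral_orbitMeasure [TopologicalSpace X] [OpensMeasurableSpace X]
    (hΦ : Measurable fun τ => Φ τ x) (hT : 0 ≤ T) {f : X → ℝ} (hf : Continuous f) :
    ∫ y, f y ∂orbitMeasure Φ x T = T⁻¹ * ∫ τ in (0 : ℝ)..T, f (Φ τ x) := by
  rw [orbitMeasure, integral_smul_measure, integral_map hΦ.aemeasurable
    hf.aestronglyMeasurable, intervalIntegral.integral_of_le hT, ENNReal.toReal_inv,
    ENNReal.toReal_ofReal hT, smul_eq_mul]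

end

variable {X : Type*} [MetricSpace X] [MeasurableSpace X] [BorelSpace X] {Φ : ℝ → X → X}

theorem abs_integral_comp_orbitMeasure_sub_le (hΦ : ∀ s t, Φ t ∘ Φ s = Φ (t + s))
    {x : X} (horb : Continuous fun τ => Φ τ x) {T : ℝ} (hT : 0 < T) {s : ℝ}
    (hs : Continuous (Φ s)) (f : X →ᵇ ℝ) :
    |∫ y, f (Φ s y) ∂orbitMeasure Φ x T - ∫ y, f y ∂orbitMeasure Φ x T| ≤
      2 * ‖f‖ * |s| / T := by
  have hshift : ∀ τ, f (Φ s (Φ τ x)) = f (Φ (τ + s) x) := fun τ => by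
    rw [← Function.comp_apply (f := Φ s), hΦ, add_comm]
  rw [integral_orbitMeasure (f := fun y => f (Φ s y)) horb.measurable hT.le
      (f.continuous.comp hs),
    integral_orbitMeasure horb.measurable hT.le f.continuous, ← mul_sub, abs_mul,
    abs_inv, abs_of_pos hT, inv_mul_eq_div]
  simp only [hshift]
  gcongr
  exact norm_intervalIntegral_comp_add_right_sub_le (f.continuous.comp horb)
    (fun τ => f.norm_coe_le_norm _) T s

theorem measurePreserving_of_tendsto_integral_orbitMeasure
    (hΦ : ∀ s t, Φ t ∘ Φ s = Φ (t + s)) (hcont : ∀ t, Continuous (Φ t))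
    {x : ℕ → X} (horb : ∀ n, Continuous fun τ => Φ τ (x n)) {T : ℕ → ℝ}
    (hTpos : ∀ n, 0 < T n) (hT : Tendsto T atTop atTop) {ν : Measure X} [IsProbabilityMeasure ν]
    (hν : ∀ f : X →ᵇ ℝ,
      Tendsto (fun n => ∫ y, f y ∂orbitMeasure Φ (x n) (T n)) atTop (𝓝 (∫ y, f y ∂ν)))
    (s : ℝ) : MeasurePreserving (Φ s) ν ν := by
  refine ⟨(hcont s).measurable, ext_of_forall_integral_eq_of_IsFiniteMeasure fun f => ?_⟩
  rw [integral_map (hcont s).measurable.aemeasurable f.continuous.aestronglyMeasurable,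
    ← sub_eq_zero]
  let fs : X →ᵇ ℝ := f.compContinuous ⟨Φ s, hcont s⟩
  have hdiff := (hν fs).sub (hν f)
  refine tendsto_nhds_unique hdiff (squeeze_zero_norm (fun n =>
    abs_integral_comp_orbitMeasure_sub_le hΦ (horb n) (hTpos n) (hcont s) f) ?_)
  exact Tendsto.div_atTop tendsto_const_nhds hT

theorem exists_invariant_integral_le_of_intervalIntegral_orbit_le [CompactSpace X]
    (hΦ : ∀ s t, Φ t ∘ Φ s = Φ (t + s)) (hcont : ∀ t, Continuous (Φ t))
    (horb : ∀ x, Continuous fun τ => Φ τ x) {φ : X → ℝ} (hφ : Continuous φ) {μ : ℝ}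
    {x : ℕ → X} {T : ℕ → ℝ} (hTpos : ∀ n, 0 < T n) (hT : Tendsto T atTop atTop)
    (hle : ∀ n, ∫ τ in (0 : ℝ)..T n, φ (Φ τ (x n)) ≤ μ * T n) :
    ∃ ν : Measure X, IsProbabilityMeasure ν ∧ (∀ t, MeasurePreserving (Φ t) ν ν) ∧
      ∫ y, φ y ∂ν ≤ μ := by
  let P (n : ℕ) : ProbabilityMeasure X :=
    ⟨orbitMeasure Φ (x n) (T n), isProbabilityMeasure_orbitMeasure (horb _).measurable (hTpos n)⟩
  obtain ⟨ν, -, σ, hσ, hPν⟩ := isCompact_univ.tendsto_subseq fun n => Set.mem_univ (P n)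
  have hlim := ProbabilityMeasure.tendsto_iff_forall_integral_tendsto.mp hPν
  refine ⟨ν, inferInstance, measurePreserving_of_tendsto_integral_orbitMeasure hΦ hcont
    (fun n => horb _) (fun n => hTpos _) (hT.comp hσ.tendsto_atTop) hlim, ?_⟩
  refine le_of_tendsto' (hlim (BoundedContinuousFunction.mkOfCompact ⟨φ, hφ⟩)) fun n => ?_
  change ∫ y, φ y ∂orbitMeasure Φ (x (σ n)) (T (σ n)) ≤ μ
  rw [integral_orbitMeasure (horb _).measurable (hTpos _).le hφ, inv_mul_le_iff₀ (hTpos _),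
    mul_comm]
  exact hle _

theorem exists_forall_mul_le_intervalIntegral_orbit_of_uniquelyErgodic [CompactSpace X]
    (hΦ : ∀ s t, Φ t ∘ Φ s = Φ (t + s)) (hcont : ∀ t, Continuous (Φ t))
    (horb : ∀ x, Continuous fun τ => Φ τ x) {ν₀ : Measure X}
    (huniq : ∀ ν : Measure X, IsProbabilityMeasure ν → (∀ t, MeasurePreserving (Φ t) ν ν) →
      ν = ν₀)
    {φ : X → ℝ} (hφ : Continuous φ) {μ : ℝ} (hμ : μ < ∫ y, φ y ∂ν₀) :
    ∃ T₀ : ℝ, 0 < T₀ ∧ ∀ t : ℝ, T₀ ≤ t → ∀ x : X, μ * t ≤ ∫ τ in (0 : ℝ)..t, φ (Φ τ x) := by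
  by_contra! hbad
  choose T hT x hx using fun n : ℕ => hbad (n + 1) n.cast_add_one_pos
  have hTpos : ∀ n, 0 < T n := fun n => n.cast_add_one_pos.trans_le (hT n)
  have hT_tendsto : Tendsto T atTop atTop :=
    tendsto_atTop_mono hT (tendsto_natCast_atTop_atTop.atTop_add tendsto_const_nhds)
  obtain ⟨ν, hν, hinv, hνφ⟩ := exists_invariant_integral_le_of_intervalIntegral_orbit_le hΦ hcont
    horb hφ hTpos hT_tendsto fun n => (hx n).le
  rw [huniq ν hν hinv] at hνφ
  linarith

end Flow

namespace Torus

variable {d : ℕ}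

theorem lipschitzWith_proj : LipschitzWith 1 (Torus.proj d) :=
  LipschitzWith.of_dist_le_mul fun a b => by
    rw [NNReal.coe_one, one_mul]
    refine (dist_pi_le_iff dist_nonneg).mpr fun i => ?_
    rw [Torus.proj, Torus.proj, dist_eq_norm, dist_eq_norm, ← AddCircle.coe_sub]
    exact QuotientAddGroup.norm_mk_le_norm.trans (norm_le_pi_norm (a - b) i)

theorem proj_add_intCast (a : Fin d → ℝ) (k : Fin d → ℤ) :
    Torus.proj d (a + fun i => (k i : ℝ)) = Torus.proj d a := by
  funext i
  have hk : ((k i : ℝ) : AddCircle (1 : ℝ)) = 0 := by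
    rw [← zsmul_one, AddCircle.coe_zsmul, AddCircle.coe_period, smul_zero]
  simp only [Torus.proj, Pi.add_apply, AddCircle.coe_add, hk, add_zero]

theorem exists_dist_add_intCast_le (a b : Fin d → ℝ) :
    ∃ k : Fin d → ℤ,
      dist a (b + fun i => (k i : ℝ)) ≤ dist (Torus.proj d a) (Torus.proj d b) := by
  refine ⟨fun i => round (a i - b i), (dist_pi_le_iff dist_nonneg).mpr fun i => ?_⟩
  have hcoord : dist (a i) (b i + round (a i - b i)) =
      dist (Torus.proj d a i) (Torus.proj d b i) := by
    rw [Torus.proj, Torus.proj, dist_eq_norm, dist_eq_norm, ← AddCircle.coe_sub,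
      UnitAddCircle.norm_eq, sub_add_eq_sub_sub, Real.norm_eq_abs]
  exact hcoord.trans_le (dist_le_pi_dist _ _ i)

end Torus

namespace IsFlowOf

variable {d : ℕ} {v : Torus d → Fin d → ℝ} {ψ : ℝ → Torus d → Torus d}

theorem apply_apply (hψ : IsFlowOf d v ψ) (s t : ℝ) (x : Torus d) :
    ψ t (ψ s x) = ψ (t + s) x :=
  congrFun (hψ.2.1 s t) x

theorem apply_apply_neg (hψ : IsFlowOf d v ψ) (t : ℝ) (x : Torus d) : ψ t (ψ (-t) x) = x := by
  rw [hψ.apply_apply, add_neg_cancel, hψ.1]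

theorem continuous_orbit_s8 (hψ : IsFlowOf d v ψ) (x : Torus d) : Continuous fun t => ψ t x := by
  obtain ⟨X, hXψ, hX⟩ := hψ.2.2 x
  simp only [← hXψ]
  exact Torus.lipschitzWith_proj.continuous.comp
    (continuous_iff_continuousAt.mpr fun t => (hX t).continuousAt)

theorem dist_le_mul_exp (hψ : IsFlowOf d v ψ) {K : NNReal} (hv : LipschitzWith K v) {s : ℝ}
    (hs : 0 ≤ s) (x y : Torus d) : dist (ψ s x) (ψ s y) ≤ dist x y * Real.exp (K * s) := by
  obtain ⟨X, hXψ, hX⟩ := hψ.2.2 x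
  obtain ⟨Y, hYψ, hY⟩ := hψ.2.2 y
  -- Shifting the lift of `y` by an integer vector makes the initial gap at most `dist x y`;
  -- both lifts then solve the ODE of the Lipschitz field `v ∘ proj` on `ℝ^d` (Gronwall).
  obtain ⟨k, hk⟩ := Torus.exists_dist_add_intCast_le (X 0) (Y 0)
  set Y' : ℝ → Fin d → ℝ := fun t => Y t + fun i => (k i : ℝ)
  have hY'ψ : ∀ t, Torus.proj d (Y' t) = ψ t y := fun t => by
    rw [Torus.proj_add_intCast, hYψ]
  have hw : LipschitzWith K (v ∘ Torus.proj d) := by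
    simpa using hv.comp Torus.lipschitzWith_proj
  have hXode : ∀ t, HasDerivAt X (v (Torus.proj d (X t))) t := fun t => by
    rw [hXψ]; exact hX t
  have hY'ode : ∀ t, HasDerivAt Y' (v (Torus.proj d (Y' t))) t := fun t => by
    rw [hY'ψ]; exact (hY t).add_const _
  have h0 : dist (X 0) (Y' 0) ≤ dist x y := by
    simpa only [hXψ, hYψ, hψ.1] using hk
  have := dist_le_of_trajectories_ODE (v := fun _ => v ∘ Torus.proj d) (fun _ => hw)
    (fun t _ => (hXode t).continuousAt.continuousWithinAt)
    (fun t _ => (hXode t).hasDerivWithinAt)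
    (fun t _ => (hY'ode t).continuousAt.continuousWithinAt)
    (fun t _ => (hY'ode t).hasDerivWithinAt) h0 s ⟨hs, le_rfl⟩
  rw [sub_zero] at this
  rw [← hXψ, ← hY'ψ]
  exact (Torus.lipschitzWith_proj.dist_le_mul _ _).trans (by simpa using this)

theorem lipschitzWith (hψ : IsFlowOf d v ψ) {K : NNReal} (hv : LipschitzWith K v) {s : ℝ}
    (hs : 0 ≤ s) : LipschitzWith (Real.toNNReal (Real.exp (K * s))) (ψ s) :=
  LipschitzWith.of_dist_le_mul fun x y => by
    rw [Real.coe_toNNReal _ (Real.exp_nonneg _), mul_comm]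
    exact hψ.dist_le_mul_exp hv hs x y

theorem continuous (hψ : IsFlowOf d v ψ) {K : NNReal} (hv : LipschitzWith K v) (t : ℝ) :
    Continuous (ψ t) := by
  rcases le_total 0 t with ht | ht
  · exact (hψ.lipschitzWith hv ht).continuous
  -- Gronwall only runs forward: `ψ t` inverts the continuous bijection `ψ (-t)` of compact `𝕋^d`.
  let e : Torus d ≃ Torus d :=
    ⟨ψ (-t), ψ t, hψ.apply_apply_neg t, fun x => by simpa using hψ.apply_apply_neg (-t) x⟩
  exact ((hψ.lipschitzWith hv (neg_nonneg.mpr ht)).continuous.homeoOfEquivCompactToT2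
    (f := e)).symm.continuous

end IsFlowOf

theorem transport_damped_uniquely_ergodic_exponential_decay_general
    (d : ℕ)
    (v : Torus d → Fin d → ℝ) (K : NNReal) (hv : LipschitzWith K v)
    (ψ : ℝ → Torus d → Torus d) (hflow : IsFlowOf d v ψ)
    -- `v` is divergence free: the flow preserves the normalized Lebesgue measure
    (hψmp : ∀ t : ℝ, MeasurePreserving (ψ t) volume volume)
    -- the flow is uniquely ergodic: `volume` is its only invariant Borel probability measure
    (huniq : ∀ μ : Measure (Torus d), IsProbabilityMeasure μ →
      (∀ t : ℝ, ∀ A : Set (Torus d), MeasurableSet A → μ (ψ t ⁻¹' A) = μ A) →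
      μ = (volume : Measure (Torus d)))
    (φ : Torus d → ℝ) (hφcont : Continuous φ)
    (p : ENNReal)
    (θ₀ : Torus d → ℝ) (hθ₀ : MemLp θ₀ p (volume : Measure (Torus d)))
    (θ : ℝ → Torus d → ℝ)
    (hθ : ∀ t : ℝ, ∀ x : Torus d,
      θ t (ψ t x) = θ₀ x * Real.exp (-∫ τ in (0:ℝ)..t, φ (ψ τ x)))
    (μ : ℝ) (hμ : μ < ∫ x, φ x ∂(volume : Measure (Torus d))) :
    ∃ T₀ : ℝ, 0 < T₀ ∧ ∀ t : ℝ, T₀ ≤ t →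
      eLpNorm (θ t) p (volume : Measure (Torus d)) ≤
        eLpNorm θ₀ p (volume : Measure (Torus d)) * ENNReal.ofReal (Real.exp (-μ * t)) := by
  obtain ⟨T₀, hT₀, hbound⟩ := Flow.exists_forall_mul_le_intervalIntegral_orbit_of_uniquelyErgodic
    hflow.2.1 (hflow.continuous hv) hflow.continuous_orbit_s8
    (fun ν hν hinv => huniq ν hν fun t _ hA => (hinv t).measure_preimage hA.nullMeasurableSet)
    hφcont hμ
  refine ⟨T₀, hT₀, fun t ht => ?_⟩
  have hdamp : ∀ y, ‖θ t y‖ ≤ Real.exp (-μ * t) * ‖(θ₀ ∘ ψ (-t)) y‖ := fun y => by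
    have hy := hθ t (ψ (-t) y)
    rw [hflow.apply_apply_neg] at hy
    rw [hy, norm_mul, Real.norm_of_nonneg (Real.exp_pos _).le, mul_comm, Function.comp_apply]
    gcongr
    linarith [hbound t ht (ψ (-t) y)]
  calc eLpNorm (θ t) p volume
      ≤ ENNReal.ofReal (Real.exp (-μ * t)) * eLpNorm (θ₀ ∘ ψ (-t)) p volume :=
        eLpNorm_le_mul_eLpNorm_of_ae_le_mul (ae_of_all _ hdamp) p
    _ = eLpNorm θ₀ p volume * ENNReal.ofReal (Real.exp (-μ * t)) := by
        rw [eLpNorm_comp_measurePreserving hθ₀.1 (hψmp (-t)), mul_comm]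

/-- **Theorem 2.2 (ii): exponential decay for uniquely ergodic flows.**
Let `d ≥ 1`, let `v : 𝕋^d → ℝ^d` be a Lipschitz divergence-free vector field (so its flow `ψ`
preserves the Lebesgue measure) whose flow is uniquely ergodic, and let `φ ≥ 0` be continuous
with `⟨φ⟩ > 0`.  Let `p ∈ [1,∞]`, `θ₀ ∈ L^p(𝕋^d)`, and let `θ` be the solution of
`∂_t θ + v·∇θ = -φ θ`, `θ(0,·) = θ₀`, given along characteristics by
`θ(t,ψ(t,x)) = θ₀(x) exp(-∫_0^t φ(ψ(τ,x)) dτ)`.  Then for every `μ ∈ [0,⟨φ⟩)` there exists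
`T₀ > 0` such that `‖θ(t)‖_{L^p} ≤ ‖θ₀‖_{L^p} e^{-μ t}` for every `t ≥ T₀`. -/
theorem transport_damped_uniquely_ergodic_exponential_decay
    (d : ℕ) (hd : 1 ≤ d)
    (v : Torus d → Fin d → ℝ) (K : NNReal) (hv : LipschitzWith K v)
    (ψ : ℝ → Torus d → Torus d) (hflow : IsFlowOf d v ψ)
    -- `v` is divergence free: the flow preserves the normalized Lebesgue measure
    (hψmp : ∀ t : ℝ, MeasurePreserving (ψ t) volume volume)
    -- the flow is uniquely ergodic: `volume` is its only invariant Borel probability measure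
    (huniq : ∀ μ : Measure (Torus d), IsProbabilityMeasure μ →
      (∀ t : ℝ, ∀ A : Set (Torus d), MeasurableSet A → μ (ψ t ⁻¹' A) = μ A) →
      μ = (volume : Measure (Torus d)))
    (φ : Torus d → ℝ) (hφ0 : ∀ x, 0 ≤ φ x) (hφcont : Continuous φ)
    (hφavg : 0 < ∫ x, φ x ∂(volume : Measure (Torus d)))
    (p : ENNReal) (hp : 1 ≤ p)
    (θ₀ : Torus d → ℝ) (hθ₀ : MemLp θ₀ p (volume : Measure (Torus d)))
    (θ : ℝ → Torus d → ℝ)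
    (hθ : ∀ t : ℝ, ∀ x : Torus d,
      θ t (ψ t x) = θ₀ x * Real.exp (-∫ τ in (0:ℝ)..t, φ (ψ τ x)))
    (μ : ℝ) (hμ0 : 0 ≤ μ) (hμ : μ < ∫ x, φ x ∂(volume : Measure (Torus d))) :
    ∃ T₀ : ℝ, 0 < T₀ ∧ ∀ t : ℝ, T₀ ≤ t →
      eLpNorm (θ t) p (volume : Measure (Torus d)) ≤
        eLpNorm θ₀ p (volume : Measure (Torus d)) * ENNReal.ofReal (Real.exp (-μ * t)) :=
  transport_damped_uniquely_ergodic_exponential_decay_general d v K hv ψ hflow hψmp huniq φ hφcont p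
    θ₀ hθ₀ θ hθ μ hμ

end
end
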